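/- Let 𝒟 be the collection of nonempty subsets D of {(k,t) : t ≤ k < ω} that are downward-closed in the coordinatewise order. For D ∈ 𝒟, let C(D) be the set of all Borel Boolean functions (arities 1 ≤ n ≤ ω) belonging to Limm0kt for every (k,t) ∈ D. Then each C(D) is a Borel clone, and for D, D' ∈ 𝒟 one has C(D) ⊆ C(D') if and only if D ⊇ D'; in particular D ↦ C(D) is an order-embedding of (𝒟, ⊇) into the lattice of Borel clones ordered by inclusion. The same holds with C(D) replaced throughout by its intersection with the monotone functions, and/or with the functions f satisfying f(1⃗) = 1. -/

import Mathlib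

open scoped Classical

/-- An arity: `some n` is the finite arity `n ≥ 1`; `none` is the countably infinite arity ω. -/
abbrev Arity := Option ℕ+

/-- The index set of an arity. -/
abbrev Idx : Arity → Type
  | some n => Fin (n : ℕ)
  | none => ℕ

/-- A Boolean function of some arity `1 ≤ n ≤ ω`.  The input space `Idx a → Bool`
carries the product topology (with `Bool` discrete), the product σ-algebra (= Borel),
and the coordinatewise partial order. -/
abbrev BFun : Type := Σ a : Arity, (Idx a → Bool) → Bool

/-- A clone: a set of Boolean functions of arities `1 ≤ n ≤ ω` containing all projections
and closed under composition. -/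
structure IsClone (F : Set BFun) : Prop where
  proj : ∀ (a : Arity) (i : Idx a), (⟨a, fun x => x i⟩ : BFun) ∈ F
  comp : ∀ (a b : Arity) (g : (Idx a → Bool) → Bool) (f : Idx a → (Idx b → Bool) → Bool),
      (⟨a, g⟩ : BFun) ∈ F → (∀ i, (⟨b, f i⟩ : BFun) ∈ F) →
      (⟨b, fun x => g fun i => f i x⟩ : BFun) ∈ F

/-- The clone generated by a set of Boolean functions. -/
def cloneGen (G : Set BFun) : Set BFun := ⋂₀ {F : Set BFun | IsClone F ∧ G ⊆ F}

/-- `f` has finite arity. -/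
def finitary (f : BFun) : Prop := f.1 ≠ none

/-- `f` is Borel: the preimage of `1` is a Borel set. -/
def IsBorelFun (f : BFun) : Prop := MeasurableSet {x | f.2 x = true}

/-- `f` is continuous (equivalently, depends on only finitely many coordinates). -/
def IsContFun (f : BFun) : Prop := Continuous f.2

/-- `f(0⃗) = 0`. -/
def PresBot (f : BFun) : Prop := f.2 (fun _ => false) = false

/-- `f(1⃗) = 1`. -/
def PresTop (f : BFun) : Prop := f.2 (fun _ => true) = true

/-- `f` vanishes on a neighborhood of `0⃗`, i.e. `0⃗` is not in the closure of `f⁻¹(1)`. -/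
def VanishNearBot (f : BFun) : Prop := (fun _ => false) ∉ closure {x | f.2 x = true}

/-- `f` equals `1` on a neighborhood of `1⃗`, i.e. `1⃗` is not in the closure of `f⁻¹(0)`. -/
def OneNearTop (f : BFun) : Prop := (fun _ => true) ∉ closure {x | f.2 x = false}

/-- Countably infinite disjunction `⋁ : 2^ω → 2`. -/
noncomputable def bigOr : (ℕ → Bool) → Bool := fun x => decide (∃ i, x i = true)

/-- Countably infinite conjunction `⋀ : 2^ω → 2`. -/
noncomputable def bigAnd : (ℕ → Bool) → Bool := fun x => decide (∀ i, x i = true)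

/-- `liminf : 2^ω → 2`, equal to `1` iff all but finitely many bits are `1`. -/
noncomputable def liminfF : (ℕ → Bool) → Bool := fun x => decide (∃ N, ∀ j, N ≤ j → x j = true)

/-- `f ∈ Limm0kt`: there do not exist `k−t` elements of `f⁻¹(1)` together with `t`
elements of the closure of `f⁻¹(1)` whose coordinatewise meet is `0⃗`. -/
def MemLimm (k t : ℕ) {a : Arity} (f : (Idx a → Bool) → Bool) : Prop :=
  ¬ ∃ (x : Fin (k - t) → Idx a → Bool) (y : Fin t → Idx a → Bool),
      (∀ r, f (x r) = true) ∧ (∀ s, y s ∈ closure {z | f z = true}) ∧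
      (∀ i : Idx a, (∃ r, x r i = false) ∨ (∃ s, y s i = false))


/-- A nonempty, coordinatewise-downward-closed set of index pairs `(k,t)` with `t ≤ k`. -/
def IsDownIdx (D : Set (ℕ × ℕ)) : Prop :=
  D.Nonempty ∧ (∀ p ∈ D, p.2 ≤ p.1) ∧
  (∀ p ∈ D, ∀ q : ℕ × ℕ, q.2 ≤ q.1 → q.1 ≤ p.1 → q.2 ≤ p.2 → q ∈ D)

/-- `C(D)`: all Borel Boolean functions belonging to `Limm0kt` for every `(k,t) ∈ D`. -/
def CD (D : Set (ℕ × ℕ)) : Set BFun :=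
  {f | IsBorelFun f ∧ ∀ p ∈ D, MemLimm p.1 p.2 f.2}

/-- `C(D)` intersected with the monotone functions. -/
def CDM (D : Set (ℕ × ℕ)) : Set BFun := {f ∈ CD D | Monotone f.2}

/-- `C(D)` intersected with the functions preserving `1⃗`. -/
def CDT (D : Set (ℕ × ℕ)) : Set BFun := {f ∈ CD D | PresTop f}

/-- `C(D)` intersected with both. -/
def CDMT (D : Set (ℕ × ℕ)) : Set BFun := {f ∈ CD D | Monotone f.2 ∧ PresTop f}

section Aux

open Filter Topology

/-! ### Basic topology/measurability helpers -/

lemma isClosed_coordTrue {ι : Type*} (i : ι) : IsClosed {z : ι → Bool | z i = true} := by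
  have : {z : ι → Bool | z i = true} = (fun z : ι → Bool => z i) ⁻¹' {true} := rfl
  rw [this]
  exact (isClosed_discrete _).preimage (continuous_apply i)

lemma isOpen_coordTrue {ι : Type*} (i : ι) : IsOpen {z : ι → Bool | z i = true} := by
  have : {z : ι → Bool | z i = true} = (fun z : ι → Bool => z i) ⁻¹' {true} := rfl
  rw [this]
  exact (isOpen_discrete _).preimage (continuous_apply i)

lemma measurableSet_coordTrue {ι : Type*} (i : ι) :
    MeasurableSet {z : ι → Bool | z i = true} := by
  have h : Measurable (fun z : ι → Bool => z i) := measurable_pi_apply i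
  have e : {z : ι → Bool | z i = true} = (fun z : ι → Bool => z i) ⁻¹' {true} := rfl
  rw [e]; exact h (MeasurableSet.singleton true)

lemma measurable_of_preimage_true {α : Type*} [MeasurableSpace α] {f : α → Bool}
    (h : MeasurableSet {x | f x = true}) : Measurable f := by
  apply measurable_to_countable'
  intro b
  cases b
  · have : f ⁻¹' {false} = {x | f x = true}ᶜ := by
      ext x; cases hx : f x <;> simp [hx]
    rw [this]; exact h.compl
  · exact h

/-! ### Projections and composition preserve `Limm0kt` -/

lemma memLimm_proj (k t : ℕ) (a : Arity) (i : Idx a) :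
    MemLimm k t (a := a) (fun x => x i) := by
  rintro ⟨x, y, hx, hy, hmeet⟩
  rcases hmeet i with ⟨r, hr⟩ | ⟨s, hs⟩
  · have h2 : x r i = true := hx r
    rw [h2] at hr; cases hr
  · have h2 : y s ∈ {z : Idx a → Bool | z i = true} :=
      (isClosed_coordTrue i).closure_eq ▸ hy s
    have h3 : y s i = true := h2
    rw [h3] at hs; cases hs

lemma memLimm_comp (k t : ℕ) (a b : Arity) (g : (Idx a → Bool) → Bool)
    (f : Idx a → (Idx b → Bool) → Bool)
    (hg : MemLimm k t g) (hf : ∀ i, MemLimm k t (f i)) :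
    MemLimm k t (a := b) (fun x => g fun i => f i x) := by
  rintro ⟨x, y, hx, hy, hmeet⟩
  set F : (Idx b → Bool) → (Idx a → Bool) := fun z i => f i z with hFdef
  set S : Set (Idx b → Bool) := {z | g (F z) = true} with hSdef
  have key : ∀ s : Fin t, ∃ v : Idx a → Bool, v ∈ closure {u | g u = true} ∧
      ∀ i, v i = true → y s ∈ closure {z | f i z = true} := by
    intro s
    have hne : (𝓝 (y s) ⊓ 𝓟 S).NeBot := mem_closure_iff_clusterPt.mp (hy s)
    have hmapne : (Filter.map F (𝓝 (y s) ⊓ 𝓟 S)).NeBot := (Filter.map_neBot_iff F).mpr hne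
    obtain ⟨v, hv⟩ := exists_clusterPt_of_compactSpace (Filter.map F (𝓝 (y s) ⊓ 𝓟 S))
    refine ⟨v, ?_, ?_⟩
    · have hle : Filter.map F (𝓝 (y s) ⊓ 𝓟 S) ≤ 𝓟 {u | g u = true} := by
        refine (Filter.map_mono inf_le_right).trans ?_
        rw [Filter.map_principal]
        refine Filter.principal_mono.mpr ?_
        rintro _ ⟨z, hz, rfl⟩
        exact hz
      exact mem_closure_iff_clusterPt.mpr (hv.mono hle)
    · intro i hvi
      set U : Set (Idx a → Bool) := {u | u i = true} with hUdef
      have hU : U ∈ 𝓝 v := (isOpen_coordTrue i).mem_nhds hvi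
      have h1 : (𝓟 U ⊓ Filter.map F (𝓝 (y s) ⊓ 𝓟 S)).NeBot :=
        hv.neBot.mono (inf_le_inf_right _ (le_principal_iff.mpr hU))
      have h2 : (Filter.map F ((𝓝 (y s) ⊓ 𝓟 S) ⊓ 𝓟 (F ⁻¹' U))).NeBot := by
        rw [← Filter.comap_principal, Filter.push_pull]
        exact h1.mono (inf_comm _ _).le
      have h3 : ((𝓝 (y s) ⊓ 𝓟 S) ⊓ 𝓟 (F ⁻¹' U)).NeBot := (Filter.map_neBot_iff F).mp h2
      have h4 : (𝓝 (y s) ⊓ 𝓟 {z | f i z = true}).NeBot := by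
        refine h3.mono ?_
        have : F ⁻¹' U = {z | f i z = true} := rfl
        rw [this]
        exact inf_le_inf (inf_le_left) le_rfl
      exact mem_closure_iff_clusterPt.mpr h4
  choose v hv1 hv2 using key
  by_cases H : ∀ i : Idx a, (∃ r, F (x r) i = false) ∨ (∃ s, v s i = false)
  · exact hg ⟨fun r => F (x r), v, hx, hv1, H⟩
  · push_neg at H
    obtain ⟨i, hir, his⟩ := H
    refine hf i ⟨x, y, ?_, ?_, hmeet⟩
    · intro r
      have := hir r
      cases hfx : f i (x r)
      · exact absurd hfx this
      · rfl
    · intro s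
      apply hv2 s i
      have := his s
      cases hvs : v s i
      · exact absurd hvs this
      · rfl

/-! ### Clone lemmas for the `CD` families -/

lemma isClone_CD (D : Set (ℕ × ℕ)) : IsClone (CD D) := by
  constructor
  · intro a i
    refine ⟨measurableSet_coordTrue i, fun p _ => memLimm_proj p.1 p.2 a i⟩
  · rintro a b g f ⟨hgB, hgL⟩ hfm
    constructor
    · have hmeas : Measurable (fun z : Idx b → Bool => (fun i => f i z : Idx a → Bool)) :=
        measurable_pi_lambda _ (fun i => measurable_of_preimage_true (hfm i).1)
      have : {x : Idx b → Bool | g (fun i => f i x) = true} =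
          (fun z : Idx b → Bool => (fun i => f i z : Idx a → Bool)) ⁻¹' {u | g u = true} := rfl
      show MeasurableSet {x : Idx b → Bool | g (fun i => f i x) = true}
      rw [this]
      exact hmeas hgB
    · intro p hp
      exact memLimm_comp p.1 p.2 a b g f (hgL p hp) (fun i => (hfm i).2 p hp)

lemma mono_proj (a : Arity) (i : Idx a) : Monotone (fun x : Idx a → Bool => x i) :=
  fun _ _ h => h i

lemma mono_comp {a b : Arity} {g : (Idx a → Bool) → Bool}
    {f : Idx a → (Idx b → Bool) → Bool} (hg : Monotone g) (hf : ∀ i, Monotone (f i)) :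
    Monotone (fun x : Idx b → Bool => g fun i => f i x) :=
  fun _ _ h => hg (fun i => hf i h)

lemma top_proj (a : Arity) (i : Idx a) : PresTop ⟨a, fun x => x i⟩ := rfl

lemma top_comp {a b : Arity} {g : (Idx a → Bool) → Bool}
    {f : Idx a → (Idx b → Bool) → Bool} (hg : PresTop ⟨a, g⟩) (hf : ∀ i, PresTop ⟨b, f i⟩) :
    PresTop (⟨b, fun x => g fun i => f i x⟩ : BFun) := by
  show g (fun i => f i (fun _ => true)) = true
  have : (fun i => f i (fun _ => true)) = (fun _ => true) := funext fun i => hf i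
  rw [this]; exact hg

/-! ### The witness functions -/

noncomputable def wfun (k t : ℕ) : (ℕ → Bool) → Bool := fun x =>
  decide (∃ m, m < k ∧ (∀ j, x j = false → j % k = m) ∧
    (k - t ≤ m → {j | j % k = m ∧ x j = false}.Finite))

lemma wfun_eq_true {k t : ℕ} {x : ℕ → Bool} :
    wfun k t x = true ↔ ∃ m, m < k ∧ (∀ j, x j = false → j % k = m) ∧
      (k - t ≤ m → {j | j % k = m ∧ x j = false}.Finite) := by
  simp [wfun]

lemma C1_iff {k m : ℕ} {x : ℕ → Bool} :
    (∀ j, x j = false → j % k = m) ↔ (∀ j, ¬ j % k = m → x j = true) := by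
  constructor
  · intro h j hj
    cases hx : x j
    · exact absurd (h j hx) hj
    · rfl
  · intro h j hx
    by_contra hj
    rw [h j hj] at hx; cases hx

lemma finite_iff {k m : ℕ} {x : ℕ → Bool} :
    {j | j % k = m ∧ x j = false}.Finite ↔ ∃ N, ∀ j, (j % k = m ∧ N ≤ j) → x j = true := by
  constructor
  · intro h
    obtain ⟨N, hN⟩ := h.bddAbove
    refine ⟨N + 1, fun j hj => ?_⟩
    obtain ⟨hj1, hj2⟩ := hj
    cases hx : x j
    · have h1 : j ≤ N := hN ⟨hj1, hx⟩
      omega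
    · rfl
  · rintro ⟨N, hN⟩
    refine (Set.finite_Iio N).subset ?_
    rintro j ⟨hj1, hj2⟩
    by_contra h
    have hjN : N ≤ j := not_lt.mp (by simpa using h)
    rw [hN j ⟨hj1, hjN⟩] at hj2; cases hj2

lemma meas_imp_true (P : ℕ → Prop) :
    MeasurableSet {x : ℕ → Bool | ∀ j, P j → x j = true} := by
  have heq : {x : ℕ → Bool | ∀ j, P j → x j = true} =
      ⋂ j, {x : ℕ → Bool | P j → x j = true} := by
    ext x; simp [Set.mem_iInter]
  rw [heq]
  refine MeasurableSet.iInter fun j => ?_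
  by_cases h : P j
  · have : {x : ℕ → Bool | P j → x j = true} = {x : ℕ → Bool | x j = true} := by
      ext x; simp [h]
    rw [this]; exact measurableSet_coordTrue j
  · have : {x : ℕ → Bool | P j → x j = true} = Set.univ := by
      ext x; simp [h]
    rw [this]; exact MeasurableSet.univ

lemma wfun_borel (k t : ℕ) : IsBorelFun (⟨none, wfun k t⟩ : BFun) := by
  show MeasurableSet {x : ℕ → Bool | wfun k t x = true}
  have heq : {x : ℕ → Bool | wfun k t x = true} =
      ⋃ m : ℕ, ⋃ (_ : m < k), ({x : ℕ → Bool | ∀ j, ¬ j % k = m → x j = true} ∩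
        {x : ℕ → Bool | k - t ≤ m → ∃ N, ∀ j, (j % k = m ∧ N ≤ j) → x j = true}) := by
    ext x
    simp only [Set.mem_iUnion, Set.mem_inter_iff, Set.mem_setOf_eq, wfun_eq_true]
    constructor
    · rintro ⟨m, h1, h2, h3⟩
      exact ⟨m, h1, C1_iff.mp h2, fun h => finite_iff.mp (h3 h)⟩
    · rintro ⟨m, h1, h2, h3⟩
      exact ⟨m, h1, C1_iff.mpr h2, fun h => finite_iff.mpr (h3 h)⟩
  rw [heq]
  refine MeasurableSet.iUnion fun m => MeasurableSet.iUnion fun _ => ?_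
  refine (meas_imp_true _).inter ?_
  by_cases h : k - t ≤ m
  · have heq2 : {x : ℕ → Bool | k - t ≤ m → ∃ N, ∀ j, (j % k = m ∧ N ≤ j) → x j = true}
        = ⋃ N : ℕ, {x : ℕ → Bool | ∀ j, (j % k = m ∧ N ≤ j) → x j = true} := by
      ext x; simp [h]
    rw [heq2]
    exact MeasurableSet.iUnion fun N => meas_imp_true _
  · have heq2 : {x : ℕ → Bool | k - t ≤ m → ∃ N, ∀ j, (j % k = m ∧ N ≤ j) → x j = true}
        = Set.univ := by
      ext x; simp [h]
    rw [heq2]; exact MeasurableSet.univ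

lemma wfun_mono (k t : ℕ) : Monotone (wfun k t) := by
  intro x x' hxx'
  rw [Bool.le_iff_imp]
  intro hx
  rw [wfun_eq_true] at hx ⊢
  obtain ⟨m, h1, h2, h3⟩ := hx
  have hsub : ∀ j, x' j = false → x j = false := by
    intro j hj
    have h4 := hxx' j
    rw [hj] at h4
    cases hx2 : x j
    · rfl
    · rw [hx2] at h4; exact absurd h4 (by simp)
  refine ⟨m, h1, fun j hj => h2 j (hsub j hj), fun h => (h3 h).subset ?_⟩
  rintro j ⟨hj1, hj2⟩
  exact ⟨hj1, hsub j hj2⟩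

lemma wfun_top {k t : ℕ} (hk : 0 < k) : PresTop (⟨none, wfun k t⟩ : BFun) := by
  show wfun k t (fun _ => true) = true
  rw [wfun_eq_true]
  refine ⟨0, hk, fun j hj => by simp at hj, fun _ => ?_⟩
  have : {j | j % k = 0 ∧ (fun _ : ℕ => true) j = false} = ∅ := by ext j; simp
  rw [this]; exact Set.finite_empty

lemma wfun_not_memLimm {k t : ℕ} (hk : 0 < k) (ht : t ≤ k) :
    ¬ MemLimm k t (a := none) (wfun k t) := by
  intro h
  apply h
  refine ⟨fun r j => !(decide (j % k = (r : ℕ))), fun s j => !(decide (j % k = k - t + (s : ℕ))),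
    ?_, ?_, ?_⟩
  · intro r
    rw [wfun_eq_true]
    refine ⟨(r : ℕ), lt_of_lt_of_le r.isLt (Nat.sub_le k t), ?_, ?_⟩
    · intro j hj; simpa using hj
    · intro hle; exact absurd hle (not_le.mpr r.isLt)
  · intro s
    set m := k - t + (s : ℕ) with hm
    have hmk : m < k := by have := s.isLt; omega
    apply mem_closure_of_tendsto
      (f := fun N : ℕ => fun j => !(decide (j % k = m ∧ j < N))) (b := Filter.atTop)
    · rw [tendsto_pi_nhds]
      intro j
      apply tendsto_atTop_of_eventually_const (i₀ := j + 1)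
      intro N hN
      have hjN : j < N := by omega
      by_cases hj : j % k = m <;> simp [hj, hjN, ← hm]
    · refine Filter.Eventually.of_forall fun N => ?_
      rw [Set.mem_setOf_eq, wfun_eq_true]
      refine ⟨m, hmk, ?_, fun _ => ?_⟩
      · intro j hj
        have : j % k = m ∧ j < N := by simpa using hj
        exact this.1
      · refine (Set.finite_Iio N).subset ?_
        rintro j ⟨hj1, hj2⟩
        have : j % k = m ∧ j < N := by simpa using hj2
        exact this.2
  · intro i0
    obtain ⟨i, rfl⟩ : ∃ n : ℕ, n = i0 := ⟨i0, rfl⟩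
    by_cases h : i % k < k - t
    · exact Or.inl ⟨⟨i % k, h⟩, by simp⟩
    · have h2 : i % k < k := Nat.mod_lt _ hk
      refine Or.inr ⟨⟨i % k - (k - t), by omega⟩, ?_⟩
      show (!(decide (i % k = k - t + (i % k - (k - t))))) = false
      have h3 : k - t + (i % k - (k - t)) = i % k := by omega
      simp [h3]

lemma wfun_memLimm {k t k' t' : ℕ} (hk : 0 < k) (htk : t ≤ k) (ht't : t' ≤ k')
    (hcase : k' < k ∨ t' < t) : MemLimm k' t' (a := none) (wfun k t) := by
  rintro ⟨x, y, hx, hy, hmeet⟩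
  have hxm : ∀ r, ∃ m, m < k ∧ (∀ j, x r j = false → j % k = m) ∧
      (k - t ≤ m → {j | j % k = m ∧ x r j = false}.Finite) := fun r => wfun_eq_true.mp (hx r)
  choose mx hmx1 hmx2 hmx3 using hxm
  have hclosed : IsClosed {z : ℕ → Bool | ∃ m, m < k ∧ ∀ j, z j = false → j % k = m} := by
    have heq : {z : ℕ → Bool | ∃ m, m < k ∧ ∀ j, z j = false → j % k = m} =
        ⋃ m ∈ Set.Iio k, {z : ℕ → Bool | ∀ j, z j = false → j % k = m} := by
      ext z; simp [Set.mem_iUnion]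
    rw [heq]
    refine (Set.finite_Iio k).isClosed_biUnion fun m _ => ?_
    have heq2 : {z : ℕ → Bool | ∀ j, z j = false → j % k = m} =
        ⋂ j ∈ {j : ℕ | ¬ j % k = m}, {z : ℕ → Bool | z j = true} := by
      ext z
      simp only [Set.mem_iInter, Set.mem_setOf_eq]
      exact C1_iff
    rw [heq2]
    exact isClosed_biInter fun j _ => isClosed_coordTrue j
  have hym : ∀ s, ∃ m, m < k ∧ ∀ j, y s j = false → j % k = m := by
    intro s
    have hsub : {z : ℕ → Bool | wfun k t z = true} ⊆
        {z | ∃ m, m < k ∧ ∀ j, z j = false → j % k = m} := by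
      intro z hz
      obtain ⟨m, h1, h2, _⟩ := wfun_eq_true.mp hz
      exact ⟨m, h1, h2⟩
    exact (closure_minimal hsub hclosed) (hy s)
  choose my hmy1 hmy2 using hym
  rcases hcase with hlt | hlt
  · -- fewer than `k` elements in total: some residue class is untouched
    set T : Finset ℕ := (Finset.univ.image mx) ∪ (Finset.univ.image my) with hT
    have h1 : (Finset.univ.image mx).card ≤ k' - t' := le_trans Finset.card_image_le (by simp)
    have h2 : (Finset.univ.image my).card ≤ t' := le_trans Finset.card_image_le (by simp)
    have hcard : T.card ≤ k' := le_trans (Finset.card_union_le _ _) (by omega)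
    have hex : ∃ m, m < k ∧ m ∉ T := by
      by_contra hcon
      push_neg at hcon
      have hsub : Finset.range k ⊆ T := fun m hm => hcon m (Finset.mem_range.mp hm)
      have := Finset.card_le_card hsub
      rw [Finset.card_range] at this
      omega
    obtain ⟨m, hm, hmT⟩ := hex
    have hmm : m % k = m := Nat.mod_eq_of_lt hm
    rcases hmeet m with ⟨r, hr⟩ | ⟨s, hs⟩
    · have he : mx r = m := by rw [← hmx2 r m hr, hmm]
      exact hmT (Finset.mem_union_left _ (Finset.mem_image.mpr ⟨r, Finset.mem_univ r, he⟩))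
    · have he : my s = m := by rw [← hmy2 s m hs, hmm]
      exact hmT (Finset.mem_union_right _ (Finset.mem_image.mpr ⟨s, Finset.mem_univ s, he⟩))
  · -- fewer than `t` closure elements: some limit residue class is untouched
    set N : Finset ℕ := Finset.univ.image my with hN
    have hNcard : N.card ≤ t' := le_trans Finset.card_image_le (by simp)
    have hL : (Finset.Ico (k - t) k).card = t := by rw [Nat.card_Ico]; omega
    have hex : ∃ m, m ∈ Finset.Ico (k - t) k ∧ m ∉ N := by
      by_contra hcon
      push_neg at hcon
      have hsub : Finset.Ico (k - t) k ⊆ N := fun m hm => hcon m hm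
      have := Finset.card_le_card hsub
      omega
    obtain ⟨m, hmL, hmN⟩ := hex
    obtain ⟨hm1, hm2⟩ := Finset.mem_Ico.mp hmL
    have hFin : (⋃ r, {j | j % k = m ∧ x r j = false}).Finite := by
      refine Set.finite_iUnion fun r => ?_
      by_cases hrm : mx r = m
      · subst hrm
        exact hmx3 r hm1
      · have he : {j | j % k = m ∧ x r j = false} = ∅ := by
          ext j
          simp only [Set.mem_setOf_eq, Set.mem_empty_iff_false, iff_false]
          rintro ⟨hj1, hj2⟩
          exact hrm (by rw [← hmx2 r j hj2, hj1])
        rw [he]; exact Set.finite_empty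
    have hInf : {j | j % k = m}.Infinite := by
      apply Set.infinite_of_injective_forall_mem (f := fun i : ℕ => m + i * k)
      · intro a b hab
        have hab' : m + a * k = m + b * k := hab
        exact Nat.eq_of_mul_eq_mul_right hk (Nat.add_left_cancel hab')
      · intro i
        show (m + i * k) % k = m
        rw [Nat.add_mul_mod_self_right]
        exact Nat.mod_eq_of_lt hm2
    obtain ⟨j, hj1, hj2⟩ := (hInf.diff hFin).nonempty
    rcases hmeet j with ⟨r, hr⟩ | ⟨s, hs⟩
    · exact hj2 (Set.mem_iUnion.mpr ⟨r, hj1, hr⟩)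
    · apply hmN
      have h6 : j % k = my s := hmy2 s j hs
      have hms : my s = m := by rw [← h6]; exact hj1
      rw [hN]
      exact Finset.mem_image.mpr ⟨s, Finset.mem_univ s, hms⟩

/-! ### Monotonicity and the backward direction -/

lemma CD_mono {D D' : Set (ℕ × ℕ)} (h : D' ⊆ D) : CD D ⊆ CD D' :=
  fun f hf => ⟨hf.1, fun p hp => hf.2 p (h hp)⟩

lemma backward {D D' : Set (ℕ × ℕ)} (hD : IsDownIdx D) (hD' : IsDownIdx D')
    {S S' : Set BFun} (hS : CDMT D ⊆ S) (hS' : S' ⊆ CD D') (hsub : S ⊆ S') : D' ⊆ D := by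
  rintro ⟨k, t⟩ hp'
  by_contra hp
  have htp : t ≤ k := hD'.2.1 _ hp'
  have h00 : ((0, 0) : ℕ × ℕ) ∈ D := by
    obtain ⟨q, hq⟩ := hD.1
    exact hD.2.2 q hq (0, 0) (le_refl 0) (Nat.zero_le _) (Nat.zero_le _)
  have hk : 0 < k := by
    rcases Nat.eq_zero_or_pos k with h | h
    · exfalso
      apply hp
      have ht0 : t = 0 := by omega
      rw [h, ht0]
      exact h00
    · exact h
  have hfD : (⟨none, wfun k t⟩ : BFun) ∈ CDMT D := by
    refine ⟨⟨wfun_borel k t, ?_⟩, wfun_mono k t, wfun_top hk⟩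
    intro q hq
    have hq2 : q.2 ≤ q.1 := hD.2.1 q hq
    have hcase : q.1 < k ∨ q.2 < t := by
      by_contra hcon
      push_neg at hcon
      exact hp (hD.2.2 q hq (k, t) htp hcon.1 hcon.2)
    exact wfun_memLimm hk htp hq2 hcase
  have hfD' : (⟨none, wfun k t⟩ : BFun) ∈ CD D' := hS' (hsub (hS hfD))
  exact wfun_not_memLimm hk htp (hfD'.2 (k, t) hp')

end Aux

/-- For each nonempty downward-closed `D ⊆ {(k,t) : t ≤ k}`, `C(D)` is a Borel clone, and
`C(D) ⊆ C(D') ↔ D' ⊆ D`; so `D ↦ C(D)` is an order-embedding of `(𝒟, ⊇)` into the Borel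
clones under `⊆`.  The same holds for the variants intersected with the monotone
functions and/or the functions preserving `1⃗`. -/
theorem CD_isClone_and_orderEmbedding :
    (∀ D, IsDownIdx D →
      (IsClone (CD D) ∧ ∀ f ∈ CD D, IsBorelFun f) ∧
      (IsClone (CDM D) ∧ ∀ f ∈ CDM D, IsBorelFun f) ∧
      (IsClone (CDT D) ∧ ∀ f ∈ CDT D, IsBorelFun f) ∧
      (IsClone (CDMT D) ∧ ∀ f ∈ CDMT D, IsBorelFun f)) ∧
    (∀ D D', IsDownIdx D → IsDownIdx D' →
      (CD D ⊆ CD D' ↔ D' ⊆ D) ∧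
      (CDM D ⊆ CDM D' ↔ D' ⊆ D) ∧
      (CDT D ⊆ CDT D' ↔ D' ⊆ D) ∧
      (CDMT D ⊆ CDMT D' ↔ D' ⊆ D)) := by
  constructor
  · intro D _hD
    refine ⟨⟨isClone_CD D, fun f hf => hf.1⟩, ⟨?_, fun f hf => hf.1.1⟩,
      ⟨?_, fun f hf => hf.1.1⟩, ⟨?_, fun f hf => hf.1.1⟩⟩
    · constructor
      · intro a i
        exact ⟨(isClone_CD D).proj a i, mono_proj a i⟩
      · intro a b g f hg hf
        refine ⟨(isClone_CD D).comp a b g f hg.1 (fun i => (hf i).1), ?_⟩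
        show Monotone (fun x : Idx b → Bool => g fun i => f i x)
        exact mono_comp hg.2 (fun i => (hf i).2)
    · constructor
      · intro a i
        exact ⟨(isClone_CD D).proj a i, top_proj a i⟩
      · intro a b g f hg hf
        refine ⟨(isClone_CD D).comp a b g f hg.1 (fun i => (hf i).1), ?_⟩
        show PresTop (⟨b, fun x => g fun i => f i x⟩ : BFun)
        exact top_comp hg.2 (fun i => (hf i).2)
    · constructor
      · intro a i
        exact ⟨(isClone_CD D).proj a i, mono_proj a i, top_proj a i⟩
      · intro a b g f hg hf
        refine ⟨(isClone_CD D).comp a b g f hg.1 (fun i => (hf i).1), ?_, ?_⟩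
        · show Monotone (fun x : Idx b → Bool => g fun i => f i x)
          exact mono_comp hg.2.1 (fun i => (hf i).2.1)
        · show PresTop (⟨b, fun x => g fun i => f i x⟩ : BFun)
          exact top_comp hg.2.2 (fun i => (hf i).2.2)
  · intro D D' hD hD'
    refine ⟨⟨?_, ?_⟩, ⟨?_, ?_⟩, ⟨?_, ?_⟩, ⟨?_, ?_⟩⟩
    · exact fun h => backward hD hD' (fun f hf => hf.1) (fun f hf => hf) h
    · exact fun h => CD_mono h
    · exact fun h => backward (S := CDM D) (S' := CDM D') hD hD' (fun f hf => ⟨hf.1, hf.2.1⟩) (fun f hf => hf.1) h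
    · intro h f hf
      exact ⟨CD_mono h hf.1, hf.2⟩
    · exact fun h => backward (S := CDT D) (S' := CDT D') hD hD' (fun f hf => ⟨hf.1, hf.2.2⟩) (fun f hf => hf.1) h
    · intro h f hf
      exact ⟨CD_mono h hf.1, hf.2⟩
    · exact fun h => backward hD hD' (fun f hf => hf) (fun f hf => hf.1) h
    · intro h f hf
      exact ⟨CD_mono h hf.1, hf.2⟩
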